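/- Let (S_n) be partial sums of i.i.d. centered real random variables with finite exponential moment, and let (τ_n) be random times with |τ_n − n| ≤ C√(n log log n) almost surely for all large n. Then almost surely |S_{τ_n} − S_n| / √(n log log n) → 0 as n → ∞. -/

import Mathlib

/-!
A centred variable with `E exp (c|X|) < ∞` satisfies `mgf X t ≤ exp (M t²)` for `|t| ≤ c/2`.
Writing `a n = √(n log log n)`, the Chernoff bound gives
`P(|S m - S n| ≥ ε a n) ≤ 2 exp (-t ε a n + |m - n| M t²)`, and for `|m - n| ≤ C a n` and `t`
small enough the exponent is at most `-t ε a n / 2 ≤ -t ε √n / 2`. A union bound over the `O(n)`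
indices of the window `|m - n| ≤ C a n` leaves probabilities that are summable in `n`, so by
Borel–Cantelli, almost surely `|S m - S n| < ε a n` on the whole window for all large `n`, for each
`ε = 1 / (k + 1)`. Eventually `τ n` lies in that window.
-/

open MeasureTheory ProbabilityTheory Filter
open Finset Real
open scoped Topology

lemma Real.exp_le_one_add_add_sq_mul_exp_abs (y : ℝ) : exp y ≤ 1 + y + y ^ 2 * exp |y| := by
  have h₁ : exp y - 1 ≤ y * exp y := by
    have := add_one_le_exp (-y)
    have : exp (-y) * exp y = 1 := by rw [← exp_add]; simp
    nlinarith [exp_pos y]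
  have h₂ : y * (exp y - 1) ≤ y ^ 2 * exp |y| := by
    rcases le_total 0 y with hy | hy
    · rw [abs_of_nonneg hy]; nlinarith
    · have := add_one_le_exp y
      have : 1 ≤ exp |y| := one_le_exp (abs_nonneg y)
      nlinarith
  nlinarith

lemma Real.exp_mul_le_of_abs_le_half {c t : ℝ} (hc : 0 < c) (ht : |t| ≤ c / 2) (y : ℝ) :
    exp (t * y) ≤ 1 + t * y + 8 / c ^ 2 * exp (c * |y|) * t ^ 2 := by
  set u := c / 2 * |y| with hu_def
  have hu : exp u * exp u = exp (c * |y|) := by rw [← exp_add, hu_def]; ring_nf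
  have hy : y ^ 2 ≤ 8 / c ^ 2 * exp u := by
    have h := pow_div_factorial_le_exp (x := u) (by positivity) 2
    have hu2 : u ^ 2 = c ^ 2 * y ^ 2 / 4 := by simp only [u, mul_pow, sq_abs]; ring
    rw [hu2, Nat.factorial_two] at h
    rw [div_mul_eq_mul_div, le_div_iff₀ (by positivity)]
    push_cast at h
    linarith
  have htu : exp |t * y| ≤ exp u := by
    rw [exp_le_exp, abs_mul]; exact mul_le_mul_of_nonneg_right ht (abs_nonneg y)
  calc exp (t * y) ≤ 1 + t * y + (t * y) ^ 2 * exp |t * y| := exp_le_one_add_add_sq_mul_exp_abs _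
    _ ≤ 1 + t * y + t ^ 2 * ((8 / c ^ 2 * exp u) * exp u) := by
      rw [mul_pow, mul_assoc]; gcongr
    _ = 1 + t * y + 8 / c ^ 2 * exp (c * |y|) * t ^ 2 := by rw [← hu]; ring

lemma summable_natCast_mul_exp_neg_mul_sqrt {β : ℝ} (hβ : 0 < β) :
    Summable fun n : ℕ => (n : ℝ) * exp (-(β * √n)) := by
  refine ((Real.summable_one_div_nat_pow.2 one_lt_two).mul_left
    ((Nat.factorial 6 : ℝ) / β ^ 6)).of_nonneg_of_le (fun n => by positivity) fun n => ?_
  rcases n.eq_zero_or_pos with rfl | hn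
  · simp
  have hn' : (0 : ℝ) < n := by exact_mod_cast hn
  have h6 := pow_div_factorial_le_exp (x := β * √n) (by positivity) 6
  rw [mul_pow, show √(n : ℝ) ^ 6 = (√(n : ℝ) ^ 2) ^ 3 by ring, sq_sqrt hn'.le] at h6
  rw [exp_neg, ← div_eq_mul_inv, div_le_iff₀ (exp_pos _)]
  calc (n : ℝ) = Nat.factorial 6 / β ^ 6 * (1 / n ^ 2) * (β ^ 6 * n ^ 3 / Nat.factorial 6) := by
        field_simp
    _ ≤ _ := by gcongr

lemma sqrt_mul_log_log_le (n : ℕ) : √(n * log (log n)) ≤ n := by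
  rcases n.eq_zero_or_pos with rfl | hn
  · simp
  have hn' : (1 : ℝ) ≤ n := by exact_mod_cast hn
  have hlog : log (log n) ≤ n :=
    (log_le_self (log_nonneg hn')).trans (log_le_self (by linarith))
  calc √(n * log (log n)) ≤ √(n * n) := by gcongr
    _ = n := sqrt_mul_self (by linarith)

lemma eventually_sqrt_le_sqrt_mul_log_log :
    ∀ᶠ n : ℕ in atTop, √(n : ℝ) ≤ √(n * log (log n)) := by
  filter_upwards [(tendsto_log_atTop.comp (tendsto_log_atTop.comp
    tendsto_natCast_atTop_atTop)).eventually_ge_atTop 1] with n hn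
  gcongr
  exact le_mul_of_one_le_right (Nat.cast_nonneg n) hn

lemma abs_natCast_sub_le_iff_mem_Icc {m n : ℕ} {x : ℝ} (hx : 0 ≤ x) :
    |(m : ℝ) - n| ≤ x ↔ m ∈ Icc (n - ⌊x⌋₊) (n + ⌊x⌋₊) := by
  have key : |(m : ℝ) - n| = ((max m n - min m n : ℕ) : ℝ) := by
    rcases le_total m n with h | h
    · rw [abs_of_nonpos (by simpa using h), max_eq_right h, min_eq_left h, Nat.cast_sub h]; ring
    · rw [abs_of_nonneg (by simpa using h), max_eq_left h, min_eq_right h, Nat.cast_sub h]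
  rw [key, ← Nat.le_floor_iff hx, mem_Icc]
  omega

lemma ae_eventually_notMem_of_summable_measureReal {Ω : Type*} {mΩ : MeasurableSpace Ω}
    {μ : Measure Ω} [IsFiniteMeasure μ] {s : ℕ → Set Ω} (hs : Summable fun n => μ.real (s n)) :
    ∀ᵐ ω ∂μ, ∀ᶠ n in atTop, ω ∉ s n := by
  refine ae_eventually_notMem ?_
  have h := ENNReal.ofReal_tsum_of_nonneg (fun _ => measureReal_nonneg) hs
  simp only [Measure.real, ENNReal.ofReal_toReal (measure_ne_top μ _)] at h
  exact h ▸ ENNReal.ofReal_ne_top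

namespace ProbabilityTheory

variable {Ω : Type*} {mΩ : MeasurableSpace Ω} {μ : Measure Ω}

def HasLocalSubgaussianMGF (X : Ω → ℝ) (M δ : ℝ) (μ : Measure Ω) : Prop :=
  ∀ t, |t| ≤ δ → Integrable (fun ω => exp (t * X ω)) μ ∧ mgf X μ t ≤ exp (M * t ^ 2)

lemma integrable_exp_mul_of_integrable_exp_mul_abs {Y : Ω → ℝ} (hY : AEMeasurable Y μ)
    {c t : ℝ} (hi : Integrable (fun ω => exp (c * |Y ω|)) μ) (ht : |t| ≤ c) :
    Integrable (fun ω => exp (t * Y ω)) μ := by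
  refine hi.mono (hY.const_mul t).exp.aestronglyMeasurable (ae_of_all _ fun ω => ?_)
  simp only [norm_eq_abs, abs_exp, exp_le_exp]
  calc t * Y ω ≤ |t| * |Y ω| := by rw [← abs_mul]; exact le_abs_self _
    _ ≤ c * |Y ω| := by gcongr

lemma hasLocalSubgaussianMGF_of_integrable_exp_mul_abs [IsProbabilityMeasure μ] {Y : Ω → ℝ}
    (hY : AEMeasurable Y μ) (hmean : μ[Y] = 0) {c : ℝ} (hc : 0 < c)
    (hi : Integrable (fun ω => exp (c * |Y ω|)) μ) :
    HasLocalSubgaussianMGF Y (8 / c ^ 2 * (∫ ω, exp (c * |Y ω|) ∂μ)) (c / 2) μ := by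
  have hY_int : Integrable Y μ := by
    simpa using integrable_pow_of_integrable_exp_mul hc.ne'
      (integrable_exp_mul_of_integrable_exp_mul_abs hY hi (abs_of_pos hc).le)
      (integrable_exp_mul_of_integrable_exp_mul_abs hY hi (by rw [abs_neg, abs_of_pos hc])) 1
  intro t ht
  have hint := integrable_exp_mul_of_integrable_exp_mul_abs hY hi (ht.trans (by linarith))
  refine ⟨hint, ?_⟩
  calc mgf Y μ t
      ≤ ∫ ω, 1 + t * Y ω + 8 / c ^ 2 * exp (c * |Y ω|) * t ^ 2 ∂μ :=
        integral_mono hint (by fun_prop) fun ω => exp_mul_le_of_abs_le_half hc ht (Y ω)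
    _ = 1 + 8 / c ^ 2 * (∫ ω, exp (c * |Y ω|) ∂μ) * t ^ 2 := by
        rw [integral_add (by fun_prop) (by fun_prop), integral_add (by fun_prop) (by fun_prop),
          integral_const_mul, integral_mul_const, integral_const_mul, hmean]
        simp
    _ ≤ _ := by linarith [add_one_le_exp (8 / c ^ 2 * (∫ ω, exp (c * |Y ω|) ∂μ) * t ^ 2)]

variable {M δ t : ℝ}

lemma HasLocalSubgaussianMGF.measureReal_abs_ge_le [IsFiniteMeasure μ] {X : Ω → ℝ}
    (h : HasLocalSubgaussianMGF X M δ μ) (ht : 0 ≤ t) (htδ : t ≤ δ) (r : ℝ) :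
    μ.real {ω | r ≤ |X ω|} ≤ 2 * exp (-t * r + M * t ^ 2) := by
  obtain ⟨hint_pos, hmgf_pos⟩ := h t (by rwa [abs_of_nonneg ht])
  obtain ⟨hint_neg, hmgf_neg⟩ := h (-t) (by rwa [abs_neg, abs_of_nonneg ht])
  have hup := measure_ge_le_exp_mul_mgf r ht hint_pos
  have hdown := measure_le_le_exp_mul_mgf (-r) (neg_nonpos.2 ht) hint_neg
  rw [show -(-t) * -r = -t * r by ring] at hdown
  rw [neg_sq] at hmgf_neg
  calc μ.real {ω | r ≤ |X ω|} ≤ μ.real ({ω | r ≤ X ω} ∪ {ω | X ω ≤ -r}) :=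
        measureReal_mono (fun ω (hω : r ≤ |X ω|) => show _ ∨ _ from (le_abs'.1 hω).symm)
          (measure_ne_top _ _)
    _ ≤ μ.real {ω | r ≤ X ω} + μ.real {ω | X ω ≤ -r} := measureReal_union_le _ _
    _ ≤ exp (-t * r) * exp (M * t ^ 2) + exp (-t * r) * exp (M * t ^ 2) := by
        gcongr
        · exact hup.trans (by gcongr)
        · exact hdown.trans (by gcongr)
    _ = 2 * exp (-t * r + M * t ^ 2) := by rw [exp_add]; ring

lemma HasLocalSubgaussianMGF.sum_of_identDistrib {ι : Type*} {X : ι → Ω → ℝ}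
    (hmeas : ∀ i, Measurable (X i)) (hindep : iIndepFun X μ) {j : ι}
    (hident : ∀ i, IdentDistrib (X i) (X j) μ μ) (h : HasLocalSubgaussianMGF (X j) M δ μ)
    (s : Finset ι) : HasLocalSubgaussianMGF (∑ i ∈ s, X i) (#s * M) δ μ := by
  have := hindep.isProbabilityMeasure
  intro t ht
  obtain ⟨hint, hmgf⟩ := h t ht
  refine ⟨hindep.integrable_exp_mul_sum hmeas fun i _ =>
    ((hident i).comp (measurable_const_mul t).exp).integrable_iff.2 hint, ?_⟩
  rw [hindep.mgf_sum hmeas, prod_congr rfl fun i _ => mgf_congr_of_identDistrib _ _ (hident i) t,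
    prod_const]
  calc mgf (X j) μ t ^ #s ≤ exp (M * t ^ 2) ^ #s := pow_le_pow_left₀ mgf_nonneg hmgf _
    _ = exp (#s * M * t ^ 2) := by rw [← exp_nat_mul]; ring_nf

variable {X : ℕ → Ω → ℝ}

lemma measureReal_abs_partialSum_sub_ge_le (hmeas : ∀ i, Measurable (X i))
    (hindep : iIndepFun X μ) (hident : ∀ i, IdentDistrib (X i) (X 0) μ μ)
    (hX : HasLocalSubgaussianMGF (X 0) M δ μ) (ht : 0 ≤ t) (htδ : t ≤ δ) (m n : ℕ) (r : ℝ) :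
    μ.real {ω | r ≤ |∑ i ∈ range m, X i ω - ∑ i ∈ range n, X i ω|} ≤
      2 * exp (-t * r + |(m : ℝ) - n| * M * t ^ 2) := by
  wlog hnm : n ≤ m generalizing m n
  · simpa only [abs_sub_comm] using this n m (le_of_not_ge hnm)
  have := hindep.isProbabilityMeasure
  have hsum : ∀ ω, ∑ i ∈ range m, X i ω - ∑ i ∈ range n, X i ω = (∑ i ∈ Ico n m, X i) ω := by
    simp [sum_Ico_eq_sub _ hnm]
  have hcard : |(m : ℝ) - n| = #(Ico n m) := by
    rw [Nat.card_Ico, Nat.cast_sub hnm, abs_of_nonneg (by simpa using hnm)]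
  simp_rw [hsum, hcard]
  exact (hX.sum_of_identDistrib hmeas hindep hident _).measureReal_abs_ge_le ht htδ r

theorem ae_eventually_abs_partialSum_sub_lt (hmeas : ∀ i, Measurable (X i))
    (hindep : iIndepFun X μ) (hident : ∀ i, IdentDistrib (X i) (X 0) μ μ)
    (hM : 0 ≤ M) (hδ : 0 < δ) (hX : HasLocalSubgaussianMGF (X 0) M δ μ)
    {C ε : ℝ} (hC : 0 < C) (hε : 0 < ε) :
    ∀ᵐ ω ∂μ, ∀ᶠ n : ℕ in atTop, ∀ m : ℕ, |(m : ℝ) - n| ≤ C * √(n * log (log n)) →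
      |∑ i ∈ range m, X i ω - ∑ i ∈ range n, X i ω| < ε * √(n * log (log n)) := by
  have := hindep.isProbabilityMeasure
  -- `t` is small enough that on the window the quadratic term eats at most half the linear one
  obtain ⟨t, ht, htδ, hMt⟩ : ∃ t, 0 < t ∧ t ≤ δ ∧ C * M * t ≤ ε / 2 := by
    have hsmall : ∀ᶠ t in 𝓝 (0 : ℝ), t ≤ δ ∧ C * M * t ≤ ε / 2 :=
      (eventually_le_nhds hδ).and <| (continuous_const_mul (C * M)).tendsto' 0 0 (mul_zero _)
        |>.eventually (eventually_le_nhds (half_pos hε))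
    obtain ⟨t, ⟨htδ, hMt⟩, ht⟩ :=
      ((hsmall.filter_mono nhdsWithin_le_nhds).and
        (eventually_mem_nhdsWithin (s := Set.Ioi 0))).exists
    exact ⟨t, ht, htδ, hMt⟩
  set a : ℕ → ℝ := fun n => √(n * log (log n))
  set W : ℕ → Finset ℕ := fun n => Icc (n - ⌊C * a n⌋₊) (n + ⌊C * a n⌋₊)
  set A : ℕ → Set Ω := fun n =>
    ⋃ m ∈ W n, {ω | ε * a n ≤ |∑ i ∈ range m, X i ω - ∑ i ∈ range n, X i ω|}
  have hmemW : ∀ n m : ℕ, |(m : ℝ) - n| ≤ C * a n ↔ m ∈ W n := fun n m =>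
    abs_natCast_sub_le_iff_mem_Icc (by positivity)
  have hA : ∀ᶠ n in atTop, μ.real (A n) ≤ 2 * (2 * C + 1) * (n * exp (-(t * ε / 2 * √n))) := by
    filter_upwards [eventually_sqrt_le_sqrt_mul_log_log, eventually_ge_atTop 1] with n hn hn1
    have hterm : ∀ m ∈ W n, μ.real {ω | ε * a n ≤ |∑ i ∈ range m, X i ω - ∑ i ∈ range n, X i ω|}
        ≤ 2 * exp (-(t * ε / 2 * √n)) := by
      intro m hm
      refine (measureReal_abs_partialSum_sub_ge_le hmeas hindep hident hX ht.le htδ m n _).trans ?_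
      have hmn := (hmemW n m).2 hm
      have hquad : |(m : ℝ) - n| * M * t ^ 2 ≤ ε / 2 * t * a n :=
        calc |(m : ℝ) - n| * M * t ^ 2 ≤ C * a n * M * t ^ 2 := by gcongr
          _ = C * M * t * t * a n := by ring
          _ ≤ ε / 2 * t * a n := by gcongr
      have hsqrt : t * ε / 2 * √n ≤ t * ε / 2 * a n := by gcongr
      gcongr 2 * exp ?_
      linarith
    have hcard : (#(W n) : ℝ) ≤ (2 * C + 1) * n := by
      have h1 : #(W n) ≤ 2 * ⌊C * a n⌋₊ + 1 := by simp only [W, Nat.card_Icc]; omega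
      have h2 : (⌊C * a n⌋₊ : ℝ) ≤ C * n :=
        (Nat.floor_le (by positivity)).trans (by gcongr; exact sqrt_mul_log_log_le n)
      have h3 : (1 : ℝ) ≤ n := by exact_mod_cast hn1
      calc (#(W n) : ℝ) ≤ 2 * ⌊C * a n⌋₊ + 1 := by exact_mod_cast h1
        _ ≤ (2 * C + 1) * n := by nlinarith
    calc μ.real (A n) ≤ ∑ m ∈ W n,
          μ.real {ω | ε * a n ≤ |∑ i ∈ range m, X i ω - ∑ i ∈ range n, X i ω|} :=
          measureReal_biUnion_finset_le _ _
      _ ≤ #(W n) * (2 * exp (-(t * ε / 2 * √n))) := by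
          simpa using sum_le_sum hterm
      _ ≤ (2 * C + 1) * n * (2 * exp (-(t * ε / 2 * √n))) := by gcongr
      _ = _ := by ring
  have hsum : Summable fun n => μ.real (A n) :=
    ((summable_natCast_mul_exp_neg_mul_sqrt (β := t * ε / 2) (by positivity)).mul_left _)
      |>.of_norm_bounded_eventually_nat
        (by filter_upwards [hA] with n hn; rwa [norm_of_nonneg measureReal_nonneg])
  filter_upwards [ae_eventually_notMem_of_summable_measureReal hsum] with ω hω
  filter_upwards [hω] with n hn m hm
  simp only [A, Set.mem_iUnion, Set.mem_ofPred_eq, not_exists, not_le] at hn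
  exact hn m ((hmemW n m).1 hm)

end ProbabilityTheory

theorem stmt_14
    {Ω : Type*} [MeasureSpace Ω] [IsProbabilityMeasure (ℙ : Measure Ω)]
    (X : ℕ → Ω → ℝ)
    (hmeas : ∀ i, Measurable (X i))
    (hindep : iIndepFun X ℙ)
    (hident : ∀ i, IdentDistrib (X i) (X 0) ℙ ℙ)
    (hmean : ∫ ω, X 0 ω = 0)
    (hexp : ∃ c > (0 : ℝ), Integrable (fun ω => Real.exp (c * |X 0 ω|)))
    (S : ℕ → Ω → ℝ) (hS : ∀ n ω, S n ω = ∑ i ∈ Finset.range n, X i ω)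
    (τ : ℕ → Ω → ℕ) (C : ℝ) (hC : 0 < C)
    (hτ : ∀ᵐ ω, ∀ᶠ n : ℕ in atTop,
      |(τ n ω : ℝ) - n| ≤ C * Real.sqrt (n * Real.log (Real.log n))) :
    ∀ᵐ ω, Tendsto
      (fun n : ℕ => |S (τ n ω) ω - S n ω| / Real.sqrt (n * Real.log (Real.log n)))
      atTop (nhds 0) := by
  obtain ⟨c, hc, hci⟩ := hexp
  have hX := hasLocalSubgaussianMGF_of_integrable_exp_mul_abs (hmeas 0).aemeasurable hmean hc hci
  have hfluct : ∀ k : ℕ, ∀ᵐ ω, ∀ᶠ n : ℕ in atTop, ∀ m : ℕ,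
      |(m : ℝ) - n| ≤ C * √(n * log (log n)) →
        |S m ω - S n ω| < 1 / (k + 1) * √(n * log (log n)) := fun k => by
    simpa only [hS] using ae_eventually_abs_partialSum_sub_lt hmeas hindep hident
      (by positivity) (by positivity) hX hC Nat.one_div_pos_of_nat
  filter_upwards [ae_all_iff.2 hfluct, hτ] with ω hω hτω
  refine Metric.tendsto_atTop.2 fun η hη => ?_
  obtain ⟨k, hk⟩ := exists_nat_one_div_lt hη
  obtain ⟨N, hN⟩ := eventually_atTop.1 ((hω k).and hτω)
  refine ⟨N, fun n hn => ?_⟩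
  obtain ⟨hSn, hτn⟩ := hN n hn
  rw [dist_zero_right, norm_of_nonneg (by positivity)]
  exact (div_le_of_le_mul₀ (sqrt_nonneg _) (by positivity) (hSn _ hτn).le).trans_lt hk
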